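/- Define φ : ℝ³ → ℝ by φ(ξ,η,σ) = −2cos ξ + 2cos η + 2cos(ξ − η − σ) − 2cos σ. Fix ξ ∈ ℝ and consider the 2×2 Hessian matrix of φ with respect to the variables (η,σ). Its determinant, i.e. (∂²φ/∂η²)(∂²φ/∂σ²) − (∂²φ/∂η∂σ)², evaluated at (η,σ) = (ξ, −ξ) equals −4cos²ξ; at (η,σ) = (π + ξ/3, ξ/3) it equals 12cos²(ξ/3); at (η,σ) = ((ξ−π)/3, (ξ+2π)/3) it equals 12cos²((ξ−π)/3); and at (η,σ) = ((ξ+π)/3, (ξ−2π)/3) it equals 12cos²((ξ+π)/3). -/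

import Mathlib

/-- The Ablowitz–Ladik resonance phase function. -/
noncomputable def phiAL (ξ η σ : ℝ) : ℝ :=
  -2 * Real.cos ξ + 2 * Real.cos η + 2 * Real.cos (ξ - η - σ) - 2 * Real.cos σ

/-- The determinant of the Hessian of `φ(ξ,·,·)` in the variables `(η,σ)`:
`(∂²φ/∂η²)(∂²φ/∂σ²) − (∂²φ/∂η∂σ)²`. -/
noncomputable def hessDetAL (ξ η σ : ℝ) : ℝ :=
  deriv (fun y => deriv (fun y' => phiAL ξ y' σ) y) η *
      deriv (fun s => deriv (fun s' => phiAL ξ η s') s) σ -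
    (deriv (fun y => deriv (fun s => phiAL ξ y s) σ) η) ^ 2

/-!
With `θ = ξ - η - σ`, the second partial derivatives of `φ` in `(η, σ)` are
`-2 cos η - 2 cos θ`, `2 cos σ - 2 cos θ` and `-2 cos θ`, so the Hessian determinant is
`-4 cos η cos σ + 4 cos θ (cos η - cos σ)`. At the three stationary points other than
`(ξ, -ξ)` the shifts by `π` give `cos θ = cos η = -cos σ`, and the determinant collapses
to `12 cos² η`.
-/

open Real

section PartialDerivatives

variable (ξ η σ : ℝ)

lemma hasDerivAt_phiAL_eta :
    HasDerivAt (fun y => phiAL ξ y σ) (-2 * sin η + 2 * sin (ξ - η - σ)) η := by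
  have hθ := (((hasDerivAt_id' η).const_sub ξ).sub_const σ).cos
  exact (((((hasDerivAt_cos η).const_mul 2).const_add _).add (hθ.const_mul 2)).sub_const _
    ).congr_deriv (by ring)

lemma hasDerivAt_phiAL_sigma :
    HasDerivAt (fun s => phiAL ξ η s) (2 * sin σ + 2 * sin (ξ - η - σ)) σ := by
  have hθ := ((hasDerivAt_id' σ).const_sub (ξ - η)).cos
  exact (((hθ.const_mul 2).const_add _).sub ((hasDerivAt_cos σ).const_mul 2)).congr_deriv
    (by ring)

lemma deriv_phiAL_eta : deriv (fun y => phiAL ξ y σ) η = -2 * sin η + 2 * sin (ξ - η - σ) :=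
  (hasDerivAt_phiAL_eta ξ η σ).deriv

lemma deriv_phiAL_sigma : deriv (fun s => phiAL ξ η s) σ = 2 * sin σ + 2 * sin (ξ - η - σ) :=
  (hasDerivAt_phiAL_sigma ξ η σ).deriv

lemma deriv_deriv_phiAL_eta_eta :
    deriv (fun y => deriv (fun y' => phiAL ξ y' σ) y) η = -2 * cos η - 2 * cos (ξ - η - σ) := by
  simp only [deriv_phiAL_eta]
  have hθ := (((hasDerivAt_id' η).const_sub ξ).sub_const σ).sin
  exact ((((hasDerivAt_sin η).const_mul (-2)).add (hθ.const_mul 2)).congr_deriv (by ring)).deriv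

lemma deriv_deriv_phiAL_sigma_sigma :
    deriv (fun s => deriv (fun s' => phiAL ξ η s') s) σ = 2 * cos σ - 2 * cos (ξ - η - σ) := by
  simp only [deriv_phiAL_sigma]
  have hθ := ((hasDerivAt_id' σ).const_sub (ξ - η)).sin
  exact ((((hasDerivAt_sin σ).const_mul 2).add (hθ.const_mul 2)).congr_deriv (by ring)).deriv

lemma deriv_deriv_phiAL_eta_sigma :
    deriv (fun y => deriv (fun s => phiAL ξ y s) σ) η = -2 * cos (ξ - η - σ) := by
  simp only [deriv_phiAL_sigma]
  have hθ := (((hasDerivAt_id' η).const_sub ξ).sub_const σ).sin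
  exact (((hθ.const_mul 2).const_add (2 * sin σ)).congr_deriv (by ring)).deriv

end PartialDerivatives

lemma hessDetAL_eq (ξ η σ : ℝ) :
    hessDetAL ξ η σ = -4 * cos η * cos σ + 4 * cos (ξ - η - σ) * (cos η - cos σ) := by
  rw [hessDetAL, deriv_deriv_phiAL_eta_eta, deriv_deriv_phiAL_sigma_sigma,
    deriv_deriv_phiAL_eta_sigma]
  ring

lemma hessDetAL_of_cos_eq {ξ η σ : ℝ} (hθ : cos (ξ - η - σ) = cos η) (hσ : cos σ = -cos η) :
    hessDetAL ξ η σ = 12 * cos η ^ 2 := by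
  rw [hessDetAL_eq, hθ, hσ]
  ring

/-- Values of the Hessian determinant of the Ablowitz–Ladik phase at its
stationary points in `(η,σ)`. -/
theorem hessDetAL_at_stationary_points (ξ : ℝ) :
    hessDetAL ξ ξ (-ξ) = -4 * Real.cos ξ ^ 2 ∧
    hessDetAL ξ (Real.pi + ξ / 3) (ξ / 3) = 12 * Real.cos (ξ / 3) ^ 2 ∧
    hessDetAL ξ ((ξ - Real.pi) / 3) ((ξ + 2 * Real.pi) / 3) =
      12 * Real.cos ((ξ - Real.pi) / 3) ^ 2 ∧
    hessDetAL ξ ((ξ + Real.pi) / 3) ((ξ - 2 * Real.pi) / 3) =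
      12 * Real.cos ((ξ + Real.pi) / 3) ^ 2 := by
  refine ⟨?_, ?_, ?_, ?_⟩
  · rw [hessDetAL_eq, show ξ - ξ - -ξ = ξ by ring, cos_neg]
    ring
  · have hη : cos (π + ξ / 3) = -cos (ξ / 3) := by rw [add_comm, cos_add_pi]
    have hθ : cos (ξ - (π + ξ / 3) - ξ / 3) = cos (π + ξ / 3) := by
      rw [show ξ - (π + ξ / 3) - ξ / 3 = ξ / 3 - π by ring, cos_sub_pi, hη]
    rw [hessDetAL_of_cos_eq hθ (by rw [hη, neg_neg]), hη, neg_sq]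
  · refine hessDetAL_of_cos_eq (by congr 1; ring) ?_
    rw [show (ξ + 2 * π) / 3 = (ξ - π) / 3 + π by ring, cos_add_pi]
  · refine hessDetAL_of_cos_eq (by congr 1; ring) ?_
    rw [show (ξ - 2 * π) / 3 = (ξ + π) / 3 - π by ring, cos_sub_pi]
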